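/- arXiv:1210.4965 — 4 statements merged into one kernel-verified Lean document; each statement's English description precedes it below -/
import Mathlib

section
/- Let ξ be a primitive cube root of unity and let R = Z_3[ξ] be the ring of integers of Q_3(ξ), with uniformizer π = ξ − 1. Then the kernel of the reduction map GL_m(R) → GL_m(R/π²R) is torsion-free. -/
/-!
Write an element of `GL_m²(R)` as `1 + X`. Since `π² = -3ξ` and `-ξ` is a unit, `3 ∣ X`, and
it suffices to rule out elements of prime order `q`. If `3^k ∣ X` with `k ≥ 1`, expand
`(1 + X)^q = 1`: for `q ≠ 3` this gives `q X ∈ X² M_m(R)` with `q` a `3`-adic unit, so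
`3^(2k) ∣ X`; for `q = 3` it gives `3X = -3X² - X³`, so `3^(k+2) ∣ 3X`. Either way
`3^(k+1) ∣ X`, hence `X` lies in `⋂ₙ 3ⁿ M_m(R)`, which vanishes by Krull's intersection theorem
because `M_m(R)` is a finitely generated `ℤ₃`-module.
-/

instance : Fact (Nat.Prime 3) := ⟨by norm_num⟩

/-- Mathlib's former `Monoid.IsTorsionFree` (removed since), with its old meaning. -/
def Monoid.IsTorsionFree (G : Type*) [Monoid G] : Prop :=
  ∀ g : G, g ≠ 1 → ¬IsOfFinOrder g

/-- `R = ℤ₃[ξ]`, the valuation ring of `ℚ₃(ξ)` for `ξ` a primitive cube root of unity,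
realised as `ℤ₃[X]/(X² + X + 1)`. -/
abbrev Rxi : Type := AdjoinRoot (Polynomial.X ^ 2 + Polynomial.X + 1 : Polynomial ℤ_[3])

/-- `ξ`, a primitive cube root of unity. -/
noncomputable def xi : Rxi := AdjoinRoot.root _

/-- The uniformiser `π = ξ - 1` of `ℤ₃[ξ]`. -/
noncomputable def piu : Rxi := xi - 1

/-- The congruence subgroup `GL_m^k(R)`: the kernel of reduction modulo `π^k`. -/
noncomputable def congSubgroup (m k : ℕ) : Subgroup (Matrix (Fin m) (Fin m) Rxi)ˣ :=
  MonoidHom.ker (Units.map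
    ((Ideal.Quotient.mk (Ideal.span {piu ^ k})).mapMatrix.toMonoidHom :
      Matrix (Fin m) (Fin m) Rxi →* Matrix (Fin m) (Fin m) (Rxi ⧸ Ideal.span {piu ^ k})))

open IsLocalRing

theorem Monoid.IsTorsionFree.of_forall_pow_prime_eq_one {G : Type*} [Monoid G]
    (h : ∀ g : G, ∀ p : ℕ, p.Prime → g ^ p = 1 → g = 1) : Monoid.IsTorsionFree G := by
  intro g hg hfin
  obtain ⟨n, hn, hgn⟩ := isOfFinOrder_iff_pow_eq_one.mp hfin
  suffices ∀ n, n ≠ 0 → ∀ g : G, g ^ n = 1 → g = 1 from hg (this n hn.ne' g hgn)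
  intro n
  induction n using Nat.recOnMul with
  | zero => exact fun h0 => absurd rfl h0
  | one => exact fun _ g hg => by rwa [pow_one] at hg
  | prime p hp => exact fun _ g => h g p hp
  | mul a b ha hb =>
    intro hab g hg
    rw [pow_mul] at hg
    exact ha (left_ne_zero_of_mul hab) g (hb (right_ne_zero_of_mul hab) _ hg)

theorem PadicInt.eq_zero_of_forall_exists_eq_pow_smul {p : ℕ} [Fact p.Prime] {M : Type*}
    [AddCommGroup M] [Module ℤ_[p] M] [IsHausdorff (maximalIdeal ℤ_[p]) M] {x : M}
    (h : ∀ n, ∃ y, x = (p : ℤ_[p]) ^ n • y) : x = 0 := by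
  refine IsHausdorff.haus ‹_› x fun n => ?_
  obtain ⟨y, rfl⟩ := h n
  rw [SModEq.zero, maximalIdeal_eq_span_p, Ideal.span_singleton_pow]
  exact Submodule.smul_mem_smul (Ideal.mem_span_singleton_self _) Submodule.mem_top

theorem exists_one_add_pow_eq_one_add_nsmul_add {A : Type*} [Ring A] (x : A) (n : ℕ) :
    ∃ z, (1 + x) ^ n = 1 + n • x + x * x * z := by
  induction n with
  | zero => exact ⟨0, by simp⟩
  | succ n ih =>
    obtain ⟨z, hz⟩ := ih
    refine ⟨n + z + z * x, ?_⟩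
    have hn : x * n * x = x * x * n := by rw [mul_assoc, (Nat.cast_commute n x).eq, mul_assoc]
    rw [pow_succ, hz, nsmul_eq_mul, nsmul_eq_mul, Nat.cast_succ]
    simp only [mul_add, add_mul, mul_one, one_mul, ← mul_assoc, hn, (Nat.cast_commute n x).eq]
    abel

section ThreeAdic

variable {A : Type*} [Ring A] [Algebra ℤ_[3] A]

theorem exists_eq_three_pow_smul_of_pow_coprime_eq_one {k q : ℕ} (hq : Nat.Coprime 3 q)
    {X Y : A} (hX : X = (3 : ℤ_[3]) ^ (k + 1) • Y) (h : (1 + X) ^ q = 1) :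
    ∃ Z, X = (3 : ℤ_[3]) ^ (k + 2) • Z := by
  obtain ⟨v, hv⟩ :=
    (PadicInt.isUnit_iff.mpr (PadicInt.norm_natCast_eq_one_iff.mpr hq)).exists_left_inv
  obtain ⟨z, hz⟩ := exists_one_add_pow_eq_one_add_nsmul_add X q
  have hXXz : X * X * z = (3 : ℤ_[3]) ^ (2 * k + 2) • (Y * Y * z) := by
    rw [hX, smul_mul_smul, ← pow_add, smul_mul_assoc]; ring_nf
  have hqX : (q : ℤ_[3]) • X = -(X * X * z) := by
    rw [Nat.cast_smul_eq_nsmul]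
    linear_combination (norm := abel) -(h.symm.trans hz)
  rw [hXXz] at hqX
  exact ⟨-(v • (3 : ℤ_[3]) ^ k • (Y * Y * z)), by
    linear_combination (norm := module) v • hqX - hv • X⟩

theorem exists_eq_three_pow_smul_of_pow_three_eq_one [Module.IsTorsionFree ℤ_[3] A] {k : ℕ}
    {X Y : A} (hX : X = (3 : ℤ_[3]) ^ (k + 1) • Y) (h : (1 + X) ^ 3 = 1) :
    ∃ Z, X = (3 : ℤ_[3]) ^ (k + 2) • Z := by
  have hcube : (3 : ℤ_[3]) • X + (3 : ℤ_[3]) • (X * X) + X * X * X = 0 := by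
    simp only [ofNat_smul_eq_nsmul]
    linear_combination (norm := skip) h
    noncomm_ring
  have hXX : X * X = (3 : ℤ_[3]) ^ (2 * k + 2) • (Y * Y) := by
    rw [hX, smul_mul_smul, ← pow_add]; ring_nf
  have hXXX : X * X * X = (3 : ℤ_[3]) ^ (3 * k + 3) • (Y * Y * Y) := by
    rw [hXX, hX, smul_mul_smul, ← pow_add]; ring_nf
  set W := -((3 : ℤ_[3]) ^ k • (Y * Y) + (3 : ℤ_[3]) ^ (2 * k) • (Y * Y * Y))
  have hY : (3 : ℤ_[3]) ^ (k + 2) • (Y - (3 : ℤ_[3]) • W) = 0 := by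
    rw [hXXX, hXX, hX] at hcube
    linear_combination (norm := module) hcube
  have hYW : Y = (3 : ℤ_[3]) • W :=
    sub_eq_zero.mp ((smul_eq_zero.mp hY).resolve_left (by norm_num))
  exact ⟨W, by rw [hX, hYW, smul_smul, ← pow_succ]⟩

theorem exists_eq_three_pow_smul_of_pow_prime_eq_one [Module.IsTorsionFree ℤ_[3] A]
    {k q : ℕ} (hq : q.Prime) {X Y : A} (hX : X = (3 : ℤ_[3]) ^ (k + 1) • Y)
    (h : (1 + X) ^ q = 1) : ∃ Z, X = (3 : ℤ_[3]) ^ (k + 2) • Z := by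
  rcases eq_or_ne q 3 with rfl | hq3
  · exact exists_eq_three_pow_smul_of_pow_three_eq_one hX h
  · exact exists_eq_three_pow_smul_of_pow_coprime_eq_one
      ((Nat.coprime_primes Nat.prime_three hq).mpr hq3.symm) hX h

theorem eq_zero_of_one_add_pow_prime_eq_one [IsHausdorff (maximalIdeal ℤ_[3]) A]
    [Module.IsTorsionFree ℤ_[3] A] {q : ℕ} (hq : q.Prime) {X Y : A}
    (hX : X = (3 : ℤ_[3]) • Y) (h : (1 + X) ^ q = 1) : X = 0 := by
  have hdiv : ∀ k, ∃ Z, X = (3 : ℤ_[3]) ^ (k + 1) • Z := by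
    intro k
    induction k with
    | zero => exact ⟨Y, by rw [zero_add, pow_one, hX]⟩
    | succ k ih =>
      obtain ⟨Z, hZ⟩ := ih
      exact exists_eq_three_pow_smul_of_pow_prime_eq_one hq hZ h
  refine PadicInt.eq_zero_of_forall_exists_eq_pow_smul (p := 3) fun n => ?_
  obtain ⟨Z, hZ⟩ := hdiv n
  exact ⟨(3 : ℤ_[3]) • Z, by rw [hZ, smul_smul, Nat.cast_ofNat, ← pow_succ]⟩

end ThreeAdic

theorem xi_sq_add_xi_add_one : xi ^ 2 + xi + 1 = 0 := by
  have h := AdjoinRoot.mk_self (f := (Polynomial.X ^ 2 + Polynomial.X + 1 : Polynomial ℤ_[3]))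
  rwa [map_add, map_add, map_pow, AdjoinRoot.mk_X, map_one] at h

theorem associated_piu_sq_three : Associated (piu ^ 2) 3 :=
  ⟨⟨1 + xi, -xi, by linear_combination -xi_sq_add_xi_add_one,
    by linear_combination -xi_sq_add_xi_add_one⟩,
    by simp only [piu]; linear_combination (xi - 2) * xi_sq_add_xi_add_one⟩

theorem monic_X_sq_add_X_add_one :
    (Polynomial.X ^ 2 + Polynomial.X + 1 : Polynomial ℤ_[3]).Monic := by
  monicity!

instance : Module.Free ℤ_[3] Rxi :=
  .of_basis (AdjoinRoot.powerBasis' monic_X_sq_add_X_add_one).basis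

instance : Module.Finite ℤ_[3] Rxi :=
  .of_basis (AdjoinRoot.powerBasis' monic_X_sq_add_X_add_one).basis

theorem mem_congSubgroup_iff {m k : ℕ} {g : (Matrix (Fin m) (Fin m) Rxi)ˣ} :
    g ∈ congSubgroup m k ↔ ∀ i j, piu ^ k ∣ ((g : Matrix (Fin m) (Fin m) Rxi) - 1) i j := by
  rw [congSubgroup, MonoidHom.mem_ker, Units.ext_iff]
  simp only [Units.coe_map, Units.val_one]
  rw [← map_one (Ideal.Quotient.mk (Ideal.span {piu ^ k})).mapMatrix, ← Matrix.ext_iff]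
  simp only [RingHom.toMonoidHom_eq_coe, MonoidHom.coe_coe, RingHom.mapMatrix_apply,
    Matrix.map_apply, Ideal.Quotient.eq, Ideal.mem_span_singleton, Matrix.sub_apply]

theorem exists_sub_one_eq_three_smul_of_mem_congSubgroup_two {m : ℕ}
    {g : (Matrix (Fin m) (Fin m) Rxi)ˣ} (hg : g ∈ congSubgroup m 2) :
    ∃ Y : Matrix (Fin m) (Fin m) Rxi, (g : Matrix (Fin m) (Fin m) Rxi) - 1 = (3 : ℤ_[3]) • Y := by
  choose Y hY using fun i j =>
    associated_piu_sq_three.dvd_iff_dvd_left.mp (mem_congSubgroup_iff.mp hg i j)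
  refine ⟨Matrix.of Y, Matrix.ext fun i j => ?_⟩
  rw [hY, Matrix.smul_apply, Matrix.of_apply, Algebra.smul_def, map_ofNat]

/-- The second congruence subgroup `GL_m²(ℤ₃[ξ])`, the kernel of
`GL_m(R) → GL_m(R/π²R)`, is torsion-free. -/
theorem congSubgroup_two_torsionFree (m : ℕ) :
    Monoid.IsTorsionFree (congSubgroup m 2) := by
  refine Monoid.IsTorsionFree.of_forall_pow_prime_eq_one fun ⟨g, hg⟩ q hq hgq => ?_
  obtain ⟨Y, hY⟩ := exists_sub_one_eq_three_smul_of_mem_congSubgroup_two hg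
  have hpow : (g : Matrix (Fin m) (Fin m) Rxi) ^ q = 1 := by
    simpa [Subtype.ext_iff, Units.ext_iff] using hgq
  have hX := eq_zero_of_one_add_pow_prime_eq_one hq hY (by rwa [add_sub_cancel])
  exact Subtype.ext (Units.ext (sub_eq_zero.mp hX))
end

section
/- Let G be a just-infinite soluble pro-p group of finite rank. Then G is virtually abelian; moreover, the centralizer A of any open abelian normal subgroup B ≅ Z_p^d of G is abelian and self-centralizing in G. -/
open scoped Pointwise

/-- The minimal size of a topological generating set. -/
noncomputable def topGen (G : Type*) [Group G] [TopologicalSpace G] [IsTopologicalGroup G] : ℕ :=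
  sInf {n | ∃ S : Finset G, S.card = n ∧ (Subgroup.closure (S : Set G)).topologicalClosure = ⊤}

/-- Topologically finitely generated. -/
def TopFG (G : Type*) [Group G] [TopologicalSpace G] [IsTopologicalGroup G] : Prop :=
  ∃ S : Finset G, (Subgroup.closure (S : Set G)).topologicalClosure = ⊤

/-- A pro-`p` group: a compact, totally disconnected Hausdorff topological group in which
every open normal subgroup has index a power of `p`. -/
def IsProP (p : ℕ) (G : Type*) [Group G] [TopologicalSpace G] [IsTopologicalGroup G] : Prop :=
  CompactSpace G ∧ TotallyDisconnectedSpace G ∧ T2Space G ∧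
    ∀ N : Subgroup G, N.Normal → IsOpen (N : Set G) → ∃ k : ℕ, N.index = p ^ k

/-- The closed subgroup (topologically) generated by all `p`-th powers. -/
def pPow (p : ℕ) (G : Type*) [Group G] [TopologicalSpace G] [IsTopologicalGroup G] : Subgroup G :=
  (Subgroup.closure {x : G | ∃ g : G, g ^ p = x}).topologicalClosure

/-- The closed subgroup generated by the `p`-th powers of elements of a subgroup `N`. -/
def pPowIn (p : ℕ) {G : Type*} [Group G] [TopologicalSpace G] [IsTopologicalGroup G]
    (N : Subgroup G) : Subgroup G :=
  (Subgroup.closure {x : G | ∃ g ∈ N, g ^ p = x}).topologicalClosure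

/-- Powerful: `[G,G] ≤ G^p` (closures) for odd `p`, and `[G,G] ≤ G^4` for `p = 2`. -/
def Powerful (p : ℕ) (G : Type*) [Group G] [TopologicalSpace G] [IsTopologicalGroup G] : Prop :=
  (commutator G).topologicalClosure ≤ pPow (if p = 2 then 4 else p) G

/-- Uniform: topologically finitely generated, powerful and torsion-free. -/
def Uniform (p : ℕ) (G : Type*) [Group G] [TopologicalSpace G] [IsTopologicalGroup G] : Prop :=
  TopFG G ∧ Powerful p G ∧ Monoid.IsTorsionFree G

/-- Finite rank: a common bound on the number of topological generators of closed subgroups. -/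
def FiniteRank (G : Type*) [Group G] [TopologicalSpace G] [IsTopologicalGroup G] : Prop :=
  ∃ r : ℕ, ∀ H : Subgroup G, IsClosed (H : Set G) → topGen H ≤ r

/-- The dimension of a `p`-adic analytic pro-`p` group: `d(U)` for any uniform open subgroup `U`. -/
noncomputable def dimension (p : ℕ) (G : Type*) [Group G] [TopologicalSpace G]
    [IsTopologicalGroup G] : ℕ :=
  sInf {n | ∃ H : Subgroup G, IsOpen (H : Set G) ∧ Uniform p H ∧ topGen H = n}

/-- Just-infinite: infinite, and every nontrivial closed normal subgroup has finite index. -/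
def JustInfinite (G : Type*) [Group G] [TopologicalSpace G] : Prop :=
  Infinite G ∧ ∀ N : Subgroup G, N.Normal → IsClosed (N : Set G) → N ≠ ⊥ → N.FiniteIndex


/-! In a just-infinite group every nontrivial closed normal subgroup has finite index, so a
finite normal subgroup of the infinite group `G` is trivial and a nontrivial closed normal subgroup
is open. The closure of the last nontrivial term of the derived series is therefore an open abelian
subgroup. If `B` is an open normal subgroup, its centraliser `C` is normal and `B ∩ C` is a central
subgroup of finite index in `C`, so by Schur's theorem `[C, C]` is a finite normal subgroup, hence
trivial: `C` is abelian. When `B` is abelian, `B ≤ C`, whence `C ≤ C_G(C) ≤ C_G(B) = C`. -/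

open Subgroup
open scoped commutatorElement

section Group

variable {G : Type*} [Group G]

theorem commutatorElement_mul_mem_center {a b z w : G} (hz : z ∈ center G) (hw : w ∈ center G) :
    ⁅a * z, b * w⁆ = ⁅a, b⁆ := by
  have hzc : ∀ g : G, ⁅z, g⁆ = 1 := fun g =>
    commutatorElement_eq_one_iff_mul_comm.mpr (mem_center_iff.mp hz g).symm
  have hwc : ∀ g : G, ⁅g, w⁆ = 1 := fun g =>
    commutatorElement_eq_one_iff_mul_comm.mpr (mem_center_iff.mp hw g)
  simp only [commutatorElement_mul_left_eq_conj_mul, commutatorElement_mul_right_eq_mul_conj, hzc,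
    hwc]
  group

theorem finite_commutatorSet_of_finiteIndex_center [(center G).FiniteIndex] :
    Finite (commutatorSet G) := by
  have : commutatorSet G ⊆
      Set.range (fun q : (G ⧸ center G) × (G ⧸ center G) => ⁅q.1.out, q.2.out⁆) := by
    rintro _ ⟨a, b, rfl⟩
    obtain ⟨z, hz⟩ := QuotientGroup.mk_out_eq_mul (center G) a
    obtain ⟨w, hw⟩ := QuotientGroup.mk_out_eq_mul (center G) b
    exact ⟨(a, b), by simp only [hz, hw, commutatorElement_mul_mem_center z.2 w.2]⟩
  exact ((Set.finite_range _).subset this).to_subtype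

theorem finite_commutator_of_finiteIndex_center (C : Subgroup G) [(center C).FiniteIndex] :
    Finite (⁅C, C⁆ : Subgroup G) := by
  have := finite_commutatorSet_of_finiteIndex_center (G := C)
  rw [← C.map_subtype_commutator]
  exact Finite.of_surjective _ (C.subtype.subgroupMap_surjective (commutator C))

theorem finiteIndex_center_centralizer (B : Subgroup G) [B.FiniteIndex] :
    (center (centralizer (B : Set G))).FiniteIndex := by
  have : B.subgroupOf (centralizer (B : Set G)) ≤ center (centralizer (B : Set G)) :=
    fun x hx => mem_center_iff.mpr fun y =>
      Subtype.ext (mem_centralizer_iff.mp y.2 x (mem_subgroupOf.mp hx)).symm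
  exact finiteIndex_of_le this

theorem exists_normal_ne_bot_commutator_eq_bot [Group.IsSolvable G] [Nontrivial G] :
    ∃ N : Subgroup G, N.Normal ∧ N ≠ ⊥ ∧ ⁅N, N⁆ = ⊥ := by
  classical
  obtain ⟨n, hn⟩ := Group.IsSolvable.solvable (G := G)
  have hex : ∃ m, derivedSeries G (m + 1) = ⊥ :=
    ⟨n, le_bot_iff.mp (hn ▸ derivedSeries_antitone G n.le_succ)⟩
  refine ⟨derivedSeries G (Nat.find hex), derivedSeries_normal G _, ?_, Nat.find_spec hex⟩
  cases h : Nat.find hex with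
  | zero => simpa only [derivedSeries_zero] using top_ne_bot
  | succ m => exact Nat.find_min hex (h ▸ m.lt_succ_self)

end Group

section Topology

variable {G : Type*} [Group G] [TopologicalSpace G]

theorem Subgroup.topologicalClosure_le_centralizer [IsTopologicalGroup G] [T2Space G]
    {N : Subgroup G} (hN : N ≤ centralizer (N : Set G)) :
    N.topologicalClosure ≤ centralizer (N.topologicalClosure : Set G) := by
  have hcl : ∀ K : Subgroup G, IsClosed (centralizer (K : Set G) : Set G) := fun K =>
    Set.isClosed_centralizer (K : Set G)
  have : N.topologicalClosure ≤ centralizer (N : Set G) := N.topologicalClosure_minimal hN (hcl N)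
  exact N.topologicalClosure_minimal (le_centralizer_iff.mp this) (hcl _)

namespace JustInfinite

variable (hG : JustInfinite G)
include hG

theorem eq_bot_of_finite [T1Space G] (N : Subgroup G) [N.Normal] [Finite N] : N = ⊥ := by
  by_contra hN
  have := hG.2 N ‹_› (Set.toFinite (N : Set G)).isClosed hN
  have := hG.1
  have : Finite G := (finite_iff_finite_and_finiteIndex N).mpr ⟨‹Finite N›, ‹_›⟩
  exact not_finite G

theorem isOpen_of_ne_bot [IsTopologicalGroup G] {N : Subgroup G} [N.Normal]
    (hN : IsClosed (N : Set G)) (hne : N ≠ ⊥) : IsOpen (N : Set G) :=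
  have := hG.2 N ‹_› hN hne
  N.isOpen_of_isClosed_of_finiteIndex hN

theorem exists_isOpen_le_centralizer [IsTopologicalGroup G] [T2Space G] [Group.IsSolvable G] :
    ∃ H : Subgroup G, IsOpen (H : Set G) ∧ H ≤ centralizer (H : Set G) := by
  have := hG.1
  obtain ⟨N, _, hne, hNN⟩ := exists_normal_ne_bot_commutator_eq_bot (G := G)
  have := N.is_normal_topologicalClosure
  have hcl : N.topologicalClosure ≠ ⊥ := fun h =>
    hne (le_bot_iff.mp (h ▸ N.le_topologicalClosure))
  exact ⟨_, hG.isOpen_of_ne_bot N.isClosed_topologicalClosure hcl,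
    topologicalClosure_le_centralizer (commutator_eq_bot_iff_le_centralizer.mp hNN)⟩

theorem centralizer_le_centralizer_centralizer [IsTopologicalGroup G] [CompactSpace G]
    [T1Space G] {B : Subgroup G} [B.Normal] (hBo : IsOpen (B : Set G)) :
    centralizer (B : Set G) ≤ centralizer (centralizer (B : Set G) : Set G) := by
  have : Finite (G ⧸ B) := B.quotient_finite_of_isOpen hBo
  have : B.FiniteIndex := B.finiteIndex_of_finite_quotient
  have := finiteIndex_center_centralizer B
  have := finite_commutator_of_finiteIndex_center (centralizer (B : Set G))
  exact commutator_eq_bot_iff_le_centralizer.mp (hG.eq_bot_of_finite _)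

end JustInfinite

end Topology

theorem justInfinite_soluble_structure_general (p : ℕ) [Fact p.Prime]
    (G : Type*) [Group G] [TopologicalSpace G] [IsTopologicalGroup G]
    (hpro : IsProP p G) (hsol : IsSolvable G)
    (hji : JustInfinite G) :
    (∃ H : Subgroup G, IsOpen (H : Set G) ∧ ∀ a ∈ H, ∀ b ∈ H, a * b = b * a) ∧
      ∀ (d : ℕ) (B : Subgroup G), B.Normal → IsOpen (B : Set G) →
        (∃ e : B ≃* Multiplicative (Fin d → ℤ_[p]), Continuous e ∧ Continuous e.symm) →
        (∀ a ∈ Subgroup.centralizer (B : Set G), ∀ b ∈ Subgroup.centralizer (B : Set G),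
            a * b = b * a) ∧
          Subgroup.centralizer ((Subgroup.centralizer (B : Set G) : Subgroup G) : Set G) =
            Subgroup.centralizer (B : Set G) := by
  obtain ⟨hcompact, -, ht2, -⟩ := hpro
  refine ⟨?_, fun d B hBn hBo ⟨e, _⟩ => ?_⟩
  · have : Group.IsSolvable G := hsol
    obtain ⟨H, hHo, hH⟩ := hji.exists_isOpen_le_centralizer
    exact ⟨H, hHo, fun a ha b hb => mem_centralizer_iff.mp (hH hb) a ha⟩
  · have hB : B ≤ centralizer (B : Set G) := le_centralizer_iff_isMulCommutative.mpr
      ⟨⟨fun x y => e.injective (by rw [map_mul, map_mul, mul_comm])⟩⟩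
    have hC := hji.centralizer_le_centralizer_centralizer hBo
    exact ⟨fun a ha b hb => mem_centralizer_iff.mp (hC hb) a ha,
      le_antisymm (centralizer_le hB) hC⟩

/-- A just-infinite soluble pro-`p` group of finite rank is virtually abelian, and the
centraliser of any open abelian normal subgroup `B ≅ ℤ_p^d` is abelian and self-centralising. -/
theorem justInfinite_soluble_structure (p : ℕ) [Fact p.Prime]
    (G : Type*) [Group G] [TopologicalSpace G] [IsTopologicalGroup G]
    (hpro : IsProP p G) (hsol : IsSolvable G) (hrk : FiniteRank G)
    (hji : JustInfinite G) :
    (∃ H : Subgroup G, IsOpen (H : Set G) ∧ ∀ a ∈ H, ∀ b ∈ H, a * b = b * a) ∧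
      ∀ (d : ℕ) (B : Subgroup G), B.Normal → IsOpen (B : Set G) →
        (∃ e : B ≃* Multiplicative (Fin d → ℤ_[p]), Continuous e ∧ Continuous e.symm) →
        (∀ a ∈ Subgroup.centralizer (B : Set G), ∀ b ∈ Subgroup.centralizer (B : Set G),
            a * b = b * a) ∧
          Subgroup.centralizer ((Subgroup.centralizer (B : Set G) : Subgroup G) : Set G) =
            Subgroup.centralizer (B : Set G) :=
  justInfinite_soluble_structure_general p G hpro hsol hji
end

section
/- Suppose p ≥ 3 and let G be a finite p-group such that |G : G^p| = |Ω_1(G)|. If d(G) = log_p |Ω_1(G)|, then G is powerful. -/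
/-- The minimal size of a generating set of a group. -/
noncomputable def genNum (G : Type*) [Group G] : ℕ :=
  sInf {n | ∃ S : Finset G, S.card = n ∧ Subgroup.closure (S : Set G) = ⊤}

/-- `Ω₁(G)`: the subgroup generated by the elements of order dividing `p`. -/
def Omega1 (p : ℕ) (G : Type*) [Group G] : Subgroup G :=
  Subgroup.closure {g : G | g ^ p = 1}

/-- `G^p`: the subgroup generated by the `p`-th powers. -/
def pPowFin (p : ℕ) (G : Type*) [Group G] : Subgroup G :=
  Subgroup.closure {x : G | ∃ g : G, g ^ p = x}

/-!
Write `Φ = G^p [G, G]`. Every maximal subgroup of a `p`-group is normal of index `p`, so it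
contains `Φ`; hence `Φ` lies in the Frattini subgroup and `d(G) ≤ d(G/Φ)`. A `p`-group of
order `p^n` is generated by `n` elements, so the hypotheses give
`|G : G^p| = p^{d(G)} ≤ p^{d(G/Φ)} ≤ |G : Φ| ≤ |G : G^p|`, forcing `Φ = G^p`.
-/

open Subgroup

theorem genNum_eq_rank (G : Type*) [Group G] [Finite G] : genNum G = Group.rank G := by
  obtain ⟨S, hS, hgen⟩ := Group.rank_spec G
  refine le_antisymm (hS ▸ Nat.sInf_le ⟨S, rfl, hgen⟩) ?_
  obtain ⟨T, hT, hTgen⟩ := Nat.sInf_mem (⟨S.card, S, rfl, hgen⟩ :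
    {n | ∃ S : Finset G, S.card = n ∧ closure (S : Set G) = ⊤}.Nonempty)
  exact (Group.rank_le hTgen).trans_eq hT

instance pPowFin_characteristic (p : ℕ) (G : Type*) [Group G] :
    (pPowFin p G).Characteristic :=
  characteristic_iff_map_le.mpr fun ϕ => by
    rw [pPowFin, MonoidHom.map_closure]
    exact closure_mono (by rintro _ ⟨_, ⟨g, rfl⟩, rfl⟩; exact ⟨ϕ g, (map_pow ϕ g p).symm⟩)

section

variable {G : Type*} [Group G]

theorem isSimpleOrder_subgroup_quotient_of_isCoatom {M : Subgroup G} [M.Normal]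
    (hM : IsCoatom M) : IsSimpleOrder (Subgroup (G ⧸ M)) :=
  have := Set.isSimpleOrder_Ici_iff_isCoatom.mpr hM
  OrderIso.isSimpleOrder (β := Set.Ici M) (QuotientGroup.comapMk'OrderIso M)

theorem rank_le_rank_quotient_of_le_frattini [Finite G] {N : Subgroup G} [N.Normal]
    (hN : N ≤ frattini G) : Group.rank G ≤ Group.rank (G ⧸ N) := by
  obtain ⟨T, hT, hTgen⟩ := Group.rank_spec (G ⧸ N)
  classical
  set S := T.image Quotient.out
  have hS : closure (S : Set G) ⊔ N = ⊤ := by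
    have hST : QuotientGroup.mk' N '' (S : Set G) = T := by
      ext; simp [S]
    rw [sup_comm, ← QuotientGroup.comap_map_mk', MonoidHom.map_closure, hST, hTgen, comap_top]
  calc Group.rank G ≤ S.card :=
        Group.rank_le (frattini_nongenerating (top_unique (hS ▸ sup_le_sup_left hN _)))
    _ ≤ T.card := Finset.card_image_le
    _ = Group.rank (G ⧸ N) := hT

namespace IsPGroup

variable {p : ℕ} [Fact p.Prime] (hG : IsPGroup p G)
include hG

theorem card_eq_of_isSimpleOrder [Finite G] [IsSimpleOrder (Subgroup G)] : Nat.card G = p := by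
  have : Nontrivial G := nontrivial_iff.mp inferInstance
  obtain ⟨y, hy⟩ := exists_prime_orderOf_dvd_card' p
    (hG.card_eq_or_dvd.resolve_left Finite.one_lt_card.ne')
  have hy1 : zpowers y ≠ ⊥ := by
    rw [Ne, zpowers_eq_bot]
    rintro rfl
    exact (Fact.out : p.Prime).one_lt.ne' (hy ▸ orderOf_one)
  rw [← hy, ← Nat.card_zpowers, (eq_bot_or_eq_top _).resolve_left hy1, card_top]

theorem pPowFin_sup_commutator_le_of_isCoatom [Finite G] {M : Subgroup G} (hM : IsCoatom M) :
    pPowFin p G ⊔ commutator G ≤ M := by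
  have := hG.isNilpotent
  have := Group.normalizerCondition_of_isNilpotent.normal_of_coatom M hM
  have := isSimpleOrder_subgroup_quotient_of_isCoatom hM
  have hcard : Nat.card (G ⧸ M) = p := (hG.to_quotient M).card_eq_of_isSimpleOrder
  refine sup_le ((closure_le _).mpr ?_) ?_
  · rintro _ ⟨g, rfl⟩
    rw [SetLike.mem_coe, ← QuotientGroup.eq_one_iff, QuotientGroup.mk_pow, ← hcard]
    exact pow_card_eq_one'
  · have := isCyclic_of_prime_card hcard
    exact Normal.quotient_commutative_iff_commutator_le.mp IsCyclic.isMulCommutative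

theorem pPowFin_sup_commutator_le_frattini [Finite G] :
    pPowFin p G ⊔ commutator G ≤ frattini G :=
  le_iInf₂ fun _ hM => hG.pPowFin_sup_commutator_le_of_isCoatom hM

theorem mul_index_le_index_of_lt {H K : Subgroup G} [H.FiniteIndex] (h : H < K) :
    p * K.index ≤ H.index := by
  obtain ⟨n, hn⟩ := (hG.to_subgroup K).index (H.subgroupOf K)
  have hn0 : n ≠ 0 := by
    rintro rfl
    exact h.not_ge (relIndex_eq_one.mp hn)
  rw [← relIndex_mul_index h.le, relIndex, hn]
  exact Nat.mul_le_mul_right _ (Nat.le_self_pow hn0 p)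

theorem exists_finset_closure_sup_eq_top [Finite G] (H : Subgroup G) :
    ∃ S : Finset G, closure (S : Set G) ⊔ H = ⊤ ∧ p ^ S.card ≤ H.index := by
  induction H using WellFoundedGT.induction with
  | _ H ih =>
  by_cases hH : H = ⊤
  · exact ⟨∅, by simp [hH], by simp [hH]⟩
  obtain ⟨x, -, hx⟩ := SetLike.exists_of_lt (lt_top_iff_ne_top.mpr hH)
  have hlt : H < H ⊔ zpowers x := left_lt_sup.mpr (by rwa [zpowers_le])
  obtain ⟨S, hS, hcard⟩ := ih _ hlt
  classical
  refine ⟨insert x S, top_unique (hS ▸ ?_), ?_⟩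
  · have hx : zpowers x ≤ closure ((insert x S : Finset G) : Set G) :=
      zpowers_le.mpr (subset_closure (by simp))
    have hS : closure (S : Set G) ≤ closure ((insert x S : Finset G) : Set G) :=
      closure_mono (by simp)
    exact sup_le (le_sup_of_le_left hS) (sup_le le_sup_right (le_sup_of_le_left hx))
  · calc p ^ (insert x S).card ≤ p ^ (S.card + 1) :=
          Nat.pow_le_pow_right (Fact.out : p.Prime).pos (Finset.card_insert_le x S)
      _ = p * p ^ S.card := by ring
      _ ≤ p * (H ⊔ zpowers x).index := Nat.mul_le_mul_left p hcard
      _ ≤ H.index := hG.mul_index_le_index_of_lt hlt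

theorem pow_rank_le_card [Finite G] : p ^ Group.rank G ≤ Nat.card G := by
  obtain ⟨S, hS, hcard⟩ := hG.exists_finset_closure_sup_eq_top ⊥
  rw [sup_bot_eq] at hS
  rw [index_bot] at hcard
  exact (Nat.pow_le_pow_right (Fact.out : p.Prime).pos (Group.rank_le hS)).trans hcard

end IsPGroup

end

theorem powerful_of_index_eq_omega_general (p : ℕ) (hp : p.Prime)
    (G : Type*) [Group G] [Finite G] (hG : IsPGroup p G)
    (hio : (pPowFin p G).index = Nat.card (Omega1 p G))
    (hd : p ^ genNum G = Nat.card (Omega1 p G)) :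
    commutator G ≤ pPowFin p G := by
  have : Fact p.Prime := ⟨hp⟩
  set Φ := pPowFin p G ⊔ commutator G
  have hindex : (pPowFin p G).index ≤ Φ.index :=
    calc (pPowFin p G).index = p ^ Group.rank G := by rw [hio, ← hd, genNum_eq_rank]
      _ ≤ p ^ Group.rank (G ⧸ Φ) := Nat.pow_le_pow_right hp.pos
          (rank_le_rank_quotient_of_le_frattini hG.pPowFin_sup_commutator_le_frattini)
      _ ≤ Nat.card (G ⧸ Φ) := (hG.to_quotient Φ).pow_rank_le_card
      _ = Φ.index := (index_eq_card Φ).symm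
  have hΦ : pPowFin p G = Φ :=
    le_sup_left.eq_of_not_lt fun hlt => (index_strictAnti hlt).not_ge hindex
  exact hΦ ▸ le_sup_right

/-- For `p ≥ 3`, a finite `p`-group with `|G : G^p| = |Ω₁(G)|` and
`d(G) = log_p |Ω₁(G)|` is powerful. -/
theorem powerful_of_index_eq_omega (p : ℕ) (hp : p.Prime) (hp3 : 3 ≤ p)
    (G : Type*) [Group G] [Finite G] (hG : IsPGroup p G)
    (hio : (pPowFin p G).index = Nat.card (Omega1 p G))
    (hd : p ^ genNum G = Nat.card (Omega1 p G)) :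
    commutator G ≤ pPowFin p G :=
  powerful_of_index_eq_omega_general p hp G hG hio hd
end

section
/- Let p ≥ 3 and let G = ⟨b⟩ ⋉ A be a pro-p group, where A ≅ Z_p^{d-1} (written additively), ⟨b⟩ ≅ Z_p, and b acts on A as multiplication by 1 + p^s for some s ≥ 1. Then every open subgroup of G is powerful; in particular G is hereditarily uniform. -/
open scoped Pointwise

/-!
Every element of `G` acts on `A ≅ ℤ_[p]^(d-1)` as multiplication by a scalar in `1 + pℤ_[p]`:
the elements doing so form a closed subgroup containing `b` and `A`. Let `ρ : G → ℤ_[p]` be the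
projection with kernel `A` and `H` a closed subgroup. For `x, y ∈ H`, up to swapping them,
`ρ x ∣ ρ y` since `ℤ_[p]` is a valuation ring, so `y = k a` with `k` in the closure of `⟨x⟩`
(which commutes with `x`) and `a ∈ A ∩ H`. Then `⁅x, y⁆` is conjugate to `⁅x, a⁆ = a ^ (λ - 1)`
with `λ ≡ 1 mod p`, a `p`-th power in `A ∩ H` because `A ∩ H` is closed, hence a `ℤ_[p]`-submodule.
The same decomposition shows that `H` is topologically generated by a lift of a generator of
`ρ H` and lifts of module generators of `A ∩ H`; torsion-freeness passes from `A` and `ℤ_[p]`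
to `G`.
-/

open scoped commutatorElement

namespace PadicInt

variable {p : ℕ} [Fact p.Prime] {M : Type*} [AddCommGroup M] [Module ℤ_[p] M] [TopologicalSpace M]
  [ContinuousSMul ℤ_[p] M]

theorem smul_mem_of_isClosed {S : AddSubgroup M} (hS : IsClosed (S : Set M)) (z : ℤ_[p])
    {v : M} (hv : v ∈ S) : z • v ∈ S := by
  have hz : z ∈ closure (Set.range ((↑) : ℤ → ℤ_[p])) := by
    rw [denseRange_intCast.closure_range]; trivial
  refine hS.closure_subset
    (map_mem_closure (f := fun c : ℤ_[p] => c • v) (continuous_id.smul continuous_const) hz ?_)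
  rintro _ ⟨n, rfl⟩
  simpa [Int.cast_smul_eq_zsmul] using S.zsmul_mem hv n

variable (p) in
def submoduleOfIsClosed (S : AddSubgroup M) (hS : IsClosed (S : Set M)) : Submodule ℤ_[p] M :=
  { S with smul_mem' := fun z _ hv => smul_mem_of_isClosed hS z hv }

theorem exists_one_add_p_mul_inv (z : ℤ_[p]) :
    ∃ w : ℤ_[p], (1 + p * z) * (1 + p * w) = 1 := by
  have hpz : -(p * z) ∈ nonunits ℤ_[p] := by
    rw [← IsLocalRing.mem_maximalIdeal]
    exact neg_mem (Ideal.mul_mem_right z _ p_nonunit)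
  obtain ⟨u, hu⟩ := IsLocalRing.isUnit_one_sub_self_of_mem_nonunits _ hpz
  rw [sub_neg_eq_add] at hu
  refine ⟨-(z * ↑u⁻¹), ?_⟩
  linear_combination (p * z * ↑u⁻¹) * hu - (p * z) * u.mul_inv

end PadicInt

theorem Subgroup.isClosed_toAddSubgroup'_map {G V : Type*} [Group G] [TopologicalSpace G]
    [CompactSpace G] [AddGroup V] [TopologicalSpace V] [T2Space V] {f : G →* Multiplicative V}
    (hf : Continuous f) {K : Subgroup G} (hK : IsClosed (K : Set G)) :
    IsClosed (Subgroup.toAddSubgroup' (K.map f) : Set V) := by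
  have : T2Space (Multiplicative V) := ‹T2Space V›
  exact (hK.isCompact.image hf).isClosed

theorem exists_mem_forall_toAdd_dvd {G : Type*} [Group G] [TopologicalSpace G] [CompactSpace G]
    {p : ℕ} [Fact p.Prime] {ρ : G →* Multiplicative ℤ_[p]} (hρ : Continuous ρ)
    {H : Subgroup G} (hH : IsClosed (H : Set G)) :
    ∃ h ∈ H, ∀ y ∈ H, (ρ h).toAdd ∣ (ρ y).toAdd := by
  let R := PadicInt.submoduleOfIsClosed p _ (Subgroup.isClosed_toAddSubgroup'_map hρ hH)
  obtain ⟨h, hhH, hh⟩ : ∃ h ∈ H, (ρ h).toAdd = Submodule.IsPrincipal.generator R :=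
    Subgroup.mem_map.mp (Submodule.IsPrincipal.generator_mem R)
  refine ⟨h, hhH, fun y hy => ?_⟩
  obtain ⟨z, hz⟩ : ∃ z : ℤ_[p], (ρ y).toAdd = z • Submodule.IsPrincipal.generator R :=
    (Submodule.IsPrincipal.mem_iff_eq_smul_generator R).mp (Subgroup.mem_map_of_mem ρ hy)
  exact ⟨z, by rw [hz, ← hh, smul_eq_mul, mul_comm]⟩

theorem Subgroup.isClosed_of_mulEquiv {G Q : Type*} [Group G] [TopologicalSpace G] [T2Space G]
    {A : Subgroup G} [Group Q] [TopologicalSpace Q] [CompactSpace Q] (e : A ≃* Q)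
    (he : Continuous e.symm) : IsClosed (A : Set G) := by
  have hrange : Set.range (Subtype.val ∘ e.symm) = A := by
    rw [Set.range_comp, e.symm.surjective.range_eq, Set.image_univ, Subtype.range_coe]
  exact hrange ▸ (isCompact_range (continuous_subtype_val.comp he)).isClosed

theorem Monoid.IsTorsionFree.of_injective {M N : Type*} [Monoid M] [Monoid N]
    [IsMulTorsionFree N] {f : M →* N} (hf : Function.Injective f) : Monoid.IsTorsionFree M :=
  fun _ hg hfin => hg (hf ((f.isOfFinOrder hfin).eq_one'.trans f.map_one.symm))

theorem Monoid.IsTorsionFree.subgroup {G : Type*} [Group G] (hG : Monoid.IsTorsionFree G)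
    (H : Subgroup G) : Monoid.IsTorsionFree H :=
  fun _ hg hfin => hG _ (by simpa using hg) (H.subtype.isOfFinOrder hfin)

theorem Monoid.IsTorsionFree.of_ker_le {G Q : Type*} [Group G] [Monoid Q] [IsMulTorsionFree Q]
    {N : Subgroup G} (hN : Monoid.IsTorsionFree N) (f : G →* Q) (hker : f.ker ≤ N) :
    Monoid.IsTorsionFree G := by
  intro g hg hfin
  have hgN : g ∈ N := hker (f.mem_ker.mpr (f.isOfFinOrder hfin).eq_one')
  exact hN ⟨g, hgN⟩ (by simpa using hg) ((Function.Injective.isOfFinOrder_iff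
    (f := N.subtype) Subtype.val_injective).mp hfin)

theorem powerful_of_forall_exists_pow_eq_commutator {p : ℕ} (hp : p ≠ 2) {K : Type*} [Group K]
    [TopologicalSpace K] [IsTopologicalGroup K] (h : ∀ x y : K, ∃ g : K, g ^ p = ⁅x, y⁆) :
    Powerful p K := by
  rw [Powerful, if_neg hp]
  refine Subgroup.topologicalClosure_minimal _ ?_ (Subgroup.isClosed_topologicalClosure _)
  rw [commutator_eq_closure, Subgroup.closure_le]
  rintro _ ⟨x, y, rfl⟩
  obtain ⟨g, hg⟩ := h x y
  exact Subgroup.le_topologicalClosure _ (Subgroup.subset_closure ⟨g, hg⟩)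

section TopologicalGroup

variable {G : Type*} [Group G] [TopologicalSpace G] [IsTopologicalGroup G]

theorem topFG_of_subset_closure {H : Subgroup G} (S : Finset G) (hSH : (S : Set G) ⊆ H)
    (hHS : (H : Set G) ⊆ (Subgroup.closure (S : Set G)).topologicalClosure) : TopFG H := by
  classical
  refine ⟨S.subtype (· ∈ H), (Subgroup.eq_top_iff' _).mpr fun x => ?_⟩
  have himage : H.subtype '' (S.subtype (· ∈ H) : Set H) = S := by
    ext g
    constructor
    · rintro ⟨⟨g, _⟩, hgS, rfl⟩
      exact Finset.mem_subtype.mp hgS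
    · intro hg
      exact ⟨⟨g, hSH hg⟩, Finset.mem_subtype.mpr hg, rfl⟩
  show x ∈ closure _
  rw [Topology.IsInducing.subtypeVal.closure_eq_preimage_closure_image, Set.mem_preimage,
    ← Subgroup.coe_subtype, ← Subgroup.coe_map, MonoidHom.map_closure, himage,
    ← Subgroup.topologicalClosure_coe]
  exact hHS x.2

theorem commute_of_mem_topologicalClosure_zpowers [T2Space G] {x k : G}
    (hk : k ∈ (Subgroup.zpowers x).topologicalClosure) : Commute x k := by
  have hle : (Subgroup.zpowers x).topologicalClosure ≤ Subgroup.centralizer {x} :=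
    Subgroup.topologicalClosure_minimal _
      (Subgroup.zpowers_le.mpr (Subgroup.mem_centralizer_singleton_iff.mpr rfl))
      (Set.isClosed_centralizer _)
  exact (Subgroup.mem_centralizer_singleton_iff.mp (hle hk)).symm

variable [CompactSpace G]

theorem exists_continuous_projection {A B : Subgroup G} [A.Normal] (hA : IsClosed (A : Set G))
    (hB : IsClosed (B : Set G)) (hsup : B ⊔ A = ⊤) (hinf : B ⊓ A = ⊥) :
    ∃ π : G →* B, Continuous π ∧ π.ker = A := by
  have : IsClosed (A : Set G) := hA
  have : CompactSpace B := isCompact_iff_compactSpace.mp hB.isCompact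
  let φ : B →* G ⧸ A := (QuotientGroup.mk' A).comp B.subtype
  have hφ : Function.Bijective φ := by
    refine ⟨(injective_iff_map_eq_one φ).mpr fun x hx => ?_, fun y => ?_⟩
    · have hxA : (x : G) ∈ B ⊓ A := ⟨x.2, (QuotientGroup.eq_one_iff _).mp hx⟩
      rw [hinf] at hxA
      exact Subtype.ext hxA
    · obtain ⟨g, rfl⟩ := QuotientGroup.mk'_surjective A y
      obtain ⟨c, hc, a, ha, rfl⟩ : g ∈ (B : Set G) * A := by
        rw [← Subgroup.mul_normal, hsup]; trivial
      refine ⟨⟨c, hc⟩, ?_⟩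
      simp [φ, (QuotientGroup.eq_one_iff a).mpr ha]
  let ψ := MulEquiv.ofBijective φ hφ
  have hψ : Continuous ψ.symm :=
    (Continuous.homeoOfEquivCompactToT2 (f := ψ.toEquiv)
      (QuotientGroup.continuous_mk.comp continuous_subtype_val)).symm.continuous
  refine ⟨ψ.symm.toMonoidHom.comp (QuotientGroup.mk' A),
    hψ.comp QuotientGroup.continuous_mk, ?_⟩
  ext g
  simp

variable {p : ℕ} [Fact p.Prime]

theorem exists_mem_topologicalClosure_zpowers_inv_mul_mem {A : Subgroup G}
    {ρ : G →* Multiplicative ℤ_[p]} (hρ : Continuous ρ) (hker : ρ.ker = A) {x y : G}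
    (hdvd : (ρ x).toAdd ∣ (ρ y).toAdd) :
    ∃ k ∈ (Subgroup.zpowers x).topologicalClosure, k⁻¹ * y ∈ A := by
  obtain ⟨z, hz⟩ := hdvd
  let K := (Subgroup.zpowers x).topologicalClosure
  have hx : (ρ x).toAdd ∈ Subgroup.toAddSubgroup' (K.map ρ) :=
    Subgroup.mem_map_of_mem ρ (Subgroup.le_topologicalClosure _ (Subgroup.mem_zpowers x))
  obtain ⟨k, hk, hρk⟩ := Subgroup.mem_map.mp <| PadicInt.smul_mem_of_isClosed
    (Subgroup.isClosed_toAddSubgroup'_map hρ (Subgroup.isClosed_topologicalClosure _)) z hx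
  refine ⟨k, hk, hker ▸ ρ.eq_iff.mp ?_⟩
  rw [hρk, ← ofAdd_toAdd (ρ y), hz, mul_comm]
  rfl

end TopologicalGroup

section Coordinates

variable {G : Type*} [Group G] {A : Subgroup G} {V : Type*} [AddCommGroup V]

def coordAddSubgroup (e : A ≃* Multiplicative V) (H : Subgroup G) : AddSubgroup V :=
  Subgroup.toAddSubgroup' ((H.subgroupOf A).map e.toMonoidHom)

theorem toAdd_mem_coordAddSubgroup_iff {e : A ≃* Multiplicative V} {H : Subgroup G} {a : A} :
    (e a).toAdd ∈ coordAddSubgroup e H ↔ (a : G) ∈ H := by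
  simp [coordAddSubgroup, Subgroup.mem_toAddSubgroup', Subgroup.mem_subgroupOf]

theorem mem_coordAddSubgroup_iff {e : A ≃* Multiplicative V} {H : Subgroup G} {v : V} :
    v ∈ coordAddSubgroup e H ↔ (e.symm (Multiplicative.ofAdd v) : G) ∈ H := by
  simpa using toAdd_mem_coordAddSubgroup_iff (e := e) (H := H) (a := e.symm (.ofAdd v))

theorem isClosed_coordAddSubgroup [TopologicalSpace G] [CompactSpace A] [TopologicalSpace V]
    [T2Space V] {e : A ≃* Multiplicative V} (he : Continuous e) {H : Subgroup G}
    (hH : IsClosed (H : Set G)) : IsClosed (coordAddSubgroup e H : Set V) :=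
  Subgroup.isClosed_toAddSubgroup'_map he (hH.preimage continuous_subtype_val)

variable [TopologicalSpace G] [IsTopologicalGroup G] [CompactSpace A] [TopologicalSpace V]
  [T2Space V] {e : A ≃* Multiplicative V}

theorem exists_finset_inf_subset_topologicalClosure (p : ℕ) [Fact p.Prime] [Module ℤ_[p] V]
    [ContinuousSMul ℤ_[p] V] [Module.Finite ℤ_[p] V] (he : Continuous e) {H : Subgroup G}
    (hH : IsClosed (H : Set G)) : ∃ T : Finset G, (T : Set G) ⊆ H ∧
      ((H ⊓ A : Subgroup G) : Set G) ⊆ (Subgroup.closure (T : Set G)).topologicalClosure := by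
  classical
  let N := PadicInt.submoduleOfIsClosed p _ (isClosed_coordAddSubgroup he hH)
  obtain ⟨F, hF⟩ := IsNoetherian.noetherian N
  let lift : V → G := fun v => e.symm (Multiplicative.ofAdd v)
  refine ⟨F.image lift, fun g hg => ?_, fun g hg => ?_⟩
  · obtain ⟨v, hv, rfl⟩ := Finset.mem_image.mp hg
    exact mem_coordAddSubgroup_iff.mp (hF ▸ Submodule.subset_span hv : v ∈ N)
  obtain ⟨hgH, hgA⟩ := Subgroup.mem_inf.mp hg
  set J := (Subgroup.closure (F.image lift : Set G)).topologicalClosure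
  have hJ : IsClosed (J : Set G) := Subgroup.isClosed_topologicalClosure _
  have hNJ : N ≤ PadicInt.submoduleOfIsClosed p _ (isClosed_coordAddSubgroup he hJ) := by
    rw [← hF, Submodule.span_le]
    exact fun v hv => mem_coordAddSubgroup_iff.mpr (Subgroup.le_topologicalClosure _
      (Subgroup.subset_closure (Finset.mem_image_of_mem lift hv)))
  exact toAdd_mem_coordAddSubgroup_iff.mp
    (hNJ ((toAdd_mem_coordAddSubgroup_iff (a := ⟨g, hgA⟩)).mpr hgH))

variable [CompactSpace G] {p : ℕ} [Fact p.Prime] {ρ : G →* Multiplicative ℤ_[p]}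

theorem exists_finset_subset_topologicalClosure [Module ℤ_[p] V] [ContinuousSMul ℤ_[p] V]
    [Module.Finite ℤ_[p] V] (he : Continuous e) (hρ : Continuous ρ)
    (hker : ρ.ker = A) {H : Subgroup G} (hH : IsClosed (H : Set G)) :
    ∃ S : Finset G, (S : Set G) ⊆ H ∧
      (H : Set G) ⊆ (Subgroup.closure (S : Set G)).topologicalClosure := by
  classical
  obtain ⟨h, hhH, hdvd⟩ := exists_mem_forall_toAdd_dvd hρ hH
  obtain ⟨T, hTH, hAT⟩ := exists_finset_inf_subset_topologicalClosure p he hH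
  refine ⟨insert h T, by simpa using Set.insert_subset hhH hTH, fun y hy => ?_⟩
  set J := (Subgroup.closure ((insert h T : Finset G) : Set G)).topologicalClosure
  have hhJ : h ∈ J := Subgroup.le_topologicalClosure _
    (Subgroup.subset_closure (Finset.mem_insert_self h T))
  have hTJ : (Subgroup.closure (T : Set G)).topologicalClosure ≤ J :=
    Subgroup.topologicalClosure_mono (Subgroup.closure_mono (by simp))
  obtain ⟨k, hk, hkyA⟩ := exists_mem_topologicalClosure_zpowers_inv_mul_mem hρ hker (hdvd y hy)
  have hkJ : k ∈ J := Subgroup.topologicalClosure_minimal _ (Subgroup.zpowers_le.mpr hhJ)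
    (Subgroup.isClosed_topologicalClosure _) hk
  have hkH : k ∈ H := Subgroup.topologicalClosure_minimal _ (Subgroup.zpowers_le.mpr hhH) hH hk
  have hyJ : y ∈ J := by
    simpa using J.mul_mem hkJ (hTJ (hAT ⟨H.mul_mem (H.inv_mem hkH) hy, hkyA⟩))
  exact hyJ

end Coordinates

section PrincipalUnitScalars

variable (p : ℕ) [Fact p.Prime] {G : Type*} [Group G] {A : Subgroup G} [A.Normal]
  {V : Type*} [AddCommGroup V] [Module ℤ_[p] V]

def principalUnitScalarSubgroup (e : A ≃* Multiplicative V) : Subgroup G where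
  carrier := {x | ∀ a : A, ∃ z : ℤ_[p],
    (e (MulAut.conjNormal x a)).toAdd = (1 + p * z) • (e a).toAdd}
  one_mem' a := ⟨0, by simp⟩
  mul_mem' {x y} hx hy a := by
    obtain ⟨z, hz⟩ := hy a
    obtain ⟨w, hw⟩ := hx (MulAut.conjNormal y a)
    refine ⟨z + w + p * w * z, ?_⟩
    rw [map_mul, MulAut.mul_apply, hw, hz, smul_smul]
    ring_nf
  inv_mem' {x} hx a := by
    obtain ⟨z, hz⟩ := hx (MulAut.conjNormal x⁻¹ a)
    obtain ⟨w, hw⟩ := PadicInt.exists_one_add_p_mul_inv z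
    refine ⟨w, ?_⟩
    rw [← MulAut.mul_apply, ← map_mul, mul_inv_cancel, map_one, MulAut.one_apply] at hz
    rw [hz, smul_smul, mul_comm, hw, one_smul]

variable {p}

theorem le_principalUnitScalarSubgroup (e : A ≃* Multiplicative V) :
    A ≤ principalUnitScalarSubgroup p e := by
  intro x hx a
  have hcomm : (⟨x, hx⟩ : A) * a = a * ⟨x, hx⟩ :=
    e.injective (by rw [map_mul, map_mul, mul_comm])
  have hconj : MulAut.conjNormal x a = a := by
    ext
    rw [MulAut.conjNormal_apply, mul_inv_eq_iff_eq_mul]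
    exact congrArg Subtype.val hcomm
  exact ⟨0, by simp [hconj]⟩

theorem isClosed_principalUnitScalarSubgroup [TopologicalSpace G] [IsTopologicalGroup G]
    [TopologicalSpace V] [ContinuousSMul ℤ_[p] V] [T2Space V] {e : A ≃* Multiplicative V}
    (he : Continuous e) : IsClosed (principalUnitScalarSubgroup p e : Set G) := by
  have hset : (principalUnitScalarSubgroup p e : Set G) = ⋂ a : A,
      (fun x => (e (MulAut.conjNormal x a)).toAdd) ⁻¹'
        Set.range fun z : ℤ_[p] => (1 + p * z) • (e a).toAdd := by
    ext x
    simp [principalUnitScalarSubgroup, eq_comm]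
  rw [hset]
  refine isClosed_iInter fun a => IsClosed.preimage ?_ (isCompact_range (by fun_prop)).isClosed
  have hconj : Continuous fun x : G => MulAut.conjNormal x a :=
    continuous_induced_rng.mpr (by simp only [Function.comp_def, MulAut.conjNormal_apply]; fun_prop)
  exact continuous_toAdd.comp (he.comp hconj)

theorem principalUnitScalarSubgroup_eq_top [TopologicalSpace G] [IsTopologicalGroup G]
    [TopologicalSpace V] [ContinuousSMul ℤ_[p] V] [T2Space V] {e : A ≃* Multiplicative V}
    (he : Continuous e) {b : G} (hb : b ∈ principalUnitScalarSubgroup p e)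
    (hsup : (Subgroup.closure {b}).topologicalClosure ⊔ A = ⊤) :
    principalUnitScalarSubgroup p e = ⊤ := by
  rw [eq_top_iff, ← hsup]
  exact sup_le (Subgroup.topologicalClosure_minimal _ ((Subgroup.closure_le _).mpr
    (Set.singleton_subset_iff.mpr hb)) (isClosed_principalUnitScalarSubgroup he))
    (le_principalUnitScalarSubgroup e)

variable [TopologicalSpace G] [CompactSpace A] [TopologicalSpace V] [ContinuousSMul ℤ_[p] V]
  [T2Space V] {e : A ≃* Multiplicative V}

theorem exists_pow_eq_commutator_of_mem_principalUnitScalarSubgroup (he : Continuous e)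
    {H : Subgroup G} (hH : IsClosed (H : Set G)) {x : G}
    (hx : x ∈ principalUnitScalarSubgroup p e) {a : A} (ha : (a : G) ∈ H) :
    ∃ g ∈ H, g ^ p = ⁅x, (a : G)⁆ := by
  obtain ⟨z, hz⟩ := hx a
  set a' := e.symm (Multiplicative.ofAdd (z • (e a).toAdd))
  have ha' : (e a').toAdd = z • (e a).toAdd := by simp [a']
  have ha'H : (a' : G) ∈ H := mem_coordAddSubgroup_iff.mp <|
    PadicInt.smul_mem_of_isClosed (isClosed_coordAddSubgroup he hH) z
      (toAdd_mem_coordAddSubgroup_iff.mpr ha)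
  -- in coordinates, `⁅x, a⁆ = (1 + p z) • a - a = p • (z • a)`
  have hpow : a' ^ p = MulAut.conjNormal x a * a⁻¹ := by
    apply e.injective
    apply Multiplicative.toAdd.injective
    rw [map_pow, toAdd_pow, map_mul, map_inv, toAdd_mul, toAdd_inv, hz, ha',
      ← Nat.cast_smul_eq_nsmul ℤ_[p], smul_smul, add_smul, one_smul]
    abel
  refine ⟨a', ha'H, ?_⟩
  rw [← Subgroup.coe_pow, hpow, commutatorElement_def]
  simp [MulAut.conjNormal_apply]

variable [IsTopologicalGroup G] [CompactSpace G] {ρ : G →* Multiplicative ℤ_[p]}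

theorem exists_pow_eq_commutator_of_dvd [T2Space G] (he : Continuous e)
    (hscalar : principalUnitScalarSubgroup p e = ⊤) (hρ : Continuous ρ) (hker : ρ.ker = A)
    {H : Subgroup G} (hH : IsClosed (H : Set G)) {x y : G} (hx : x ∈ H) (hy : y ∈ H)
    (hdvd : (ρ x).toAdd ∣ (ρ y).toAdd) : ∃ g ∈ H, g ^ p = ⁅x, y⁆ := by
  obtain ⟨k, hk, hkyA⟩ := exists_mem_topologicalClosure_zpowers_inv_mul_mem hρ hker hdvd
  have hkH : k ∈ H := Subgroup.topologicalClosure_minimal _ (Subgroup.zpowers_le.mpr hx) hH hk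
  obtain ⟨g, hgH, hg⟩ := exists_pow_eq_commutator_of_mem_principalUnitScalarSubgroup he hH
    (hscalar ▸ Subgroup.mem_top x) (a := ⟨k⁻¹ * y, hkyA⟩) (H.mul_mem (H.inv_mem hkH) hy)
  refine ⟨k * g * k⁻¹, H.mul_mem (H.mul_mem hkH hgH) (H.inv_mem hkH), ?_⟩
  have hxk : k * x * k⁻¹ = x := by
    rw [← (commute_of_mem_topologicalClosure_zpowers hk).eq, mul_inv_cancel_right]
  calc (k * g * k⁻¹) ^ p = k * ⁅x, k⁻¹ * y⁆ * k⁻¹ := by rw [conj_pow, hg]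
    _ = (k * x * k⁻¹) * y * x⁻¹ * y⁻¹ := by simp only [commutatorElement_def]; group
    _ = ⁅x, y⁆ := by rw [hxk, commutatorElement_def]

theorem exists_pow_eq_commutator [T2Space G] (he : Continuous e)
    (hscalar : principalUnitScalarSubgroup p e = ⊤) (hρ : Continuous ρ) (hker : ρ.ker = A)
    {H : Subgroup G} (hH : IsClosed (H : Set G)) {x y : G} (hx : x ∈ H) (hy : y ∈ H) :
    ∃ g ∈ H, g ^ p = ⁅x, y⁆ := by
  rcases ValuationRing.dvd_total (ρ x).toAdd (ρ y).toAdd with hxy | hyx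
  · exact exists_pow_eq_commutator_of_dvd he hscalar hρ hker hH hx hy hxy
  · obtain ⟨g, hgH, hg⟩ := exists_pow_eq_commutator_of_dvd he hscalar hρ hker hH hy hx hyx
    exact ⟨g⁻¹, H.inv_mem hgH, by rw [inv_pow, hg, commutatorElement_inv]⟩

end PrincipalUnitScalars

theorem hereditarily_uniform_general (p : ℕ) [Fact p.Prime] (hp3 : 3 ≤ p) (s : ℕ) (hs : 1 ≤ s)
    (d : ℕ)
    (G : Type*) [Group G] [TopologicalSpace G] [IsTopologicalGroup G] (hpro : IsProP p G)
    (A : Subgroup G) (hA : A.Normal) (b : G)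
    (eA : A ≃* Multiplicative (Fin (d - 1) → ℤ_[p]))
    (heA : Continuous eA) (heA' : Continuous eA.symm)
    (eB : (Subgroup.closure {b}).topologicalClosure ≃* Multiplicative ℤ_[p])
    (heB : Continuous eB)
    (hsup : (Subgroup.closure {b}).topologicalClosure ⊔ A = ⊤)
    (hinf : (Subgroup.closure {b}).topologicalClosure ⊓ A = ⊥)
    (hact : ∀ a : A, eA ⟨b * a * b⁻¹, hA.conj_mem a a.2 b⟩ =
      Multiplicative.ofAdd ((1 + (p : ℤ_[p]) ^ s) • Multiplicative.toAdd (eA a))) :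
    ∀ H : Subgroup G, IsOpen (H : Set G) → Powerful p H ∧ Uniform p H := by
  obtain ⟨_, -, _, -⟩ := hpro
  have : A.Normal := hA
  have hAcl : IsClosed (A : Set G) := Subgroup.isClosed_of_mulEquiv eA heA'
  have : CompactSpace A := isCompact_iff_compactSpace.mp hAcl.isCompact
  obtain ⟨π, hπ, hπker⟩ := exists_continuous_projection hAcl
    (Subgroup.isClosed_topologicalClosure _) hsup hinf
  let ρ := eB.toMonoidHom.comp π
  have hρker : ρ.ker = A := by
    ext g
    simp [ρ, ← hπker]
  have hb : b ∈ principalUnitScalarSubgroup p eA := fun a => by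
    refine ⟨p ^ (s - 1), ?_⟩
    rw [show MulAut.conjNormal b a = ⟨b * a * b⁻¹, hA.conj_mem a a.2 b⟩ from
      Subtype.ext (MulAut.conjNormal_apply b a), hact a, toAdd_ofAdd, ← pow_succ',
      Nat.sub_add_cancel hs]
  have hscalar := principalUnitScalarSubgroup_eq_top heA hb hsup
  have htf : Monoid.IsTorsionFree G :=
    (Monoid.IsTorsionFree.of_injective (f := eA.toMonoidHom) eA.injective).of_ker_le ρ hρker.le
  intro H hH
  have hHcl := H.isClosed_of_isOpen hH
  have hpow : Powerful p H := powerful_of_forall_exists_pow_eq_commutator (by omega) fun x y => by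
    obtain ⟨g, hg, hgp⟩ :=
      exists_pow_eq_commutator heA hscalar (heB.comp hπ) hρker hHcl x.2 y.2
    exact ⟨⟨g, hg⟩, Subtype.ext (by simpa [commutatorElement_def] using hgp)⟩
  obtain ⟨S, hSH, hHS⟩ := exists_finset_subset_topologicalClosure heA (heB.comp hπ) hρker hHcl
  exact ⟨hpow, topFG_of_subset_closure S hSH hHS, hpow, htf.subgroup H⟩

/-- Corollary 1.10 / Theorem 1.9 (sufficiency): for `p ≥ 3`, the pro-`p` group
`G = ⟨b⟩ ⋉ A` with `⟨b⟩ ≅ ℤ_p`, `A ≅ ℤ_p^{d-1}` and `b` acting on `A` as multiplication by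
`1 + p^s` (`s ≥ 1`) is hereditarily powerful, indeed hereditarily uniform. -/
theorem hereditarily_uniform (p : ℕ) [Fact p.Prime] (hp3 : 3 ≤ p) (s : ℕ) (hs : 1 ≤ s)
    (d : ℕ) (hd : 2 ≤ d)
    (G : Type*) [Group G] [TopologicalSpace G] [IsTopologicalGroup G] (hpro : IsProP p G)
    (A : Subgroup G) (hA : A.Normal) (b : G)
    (eA : A ≃* Multiplicative (Fin (d - 1) → ℤ_[p]))
    (heA : Continuous eA) (heA' : Continuous eA.symm)
    (eB : (Subgroup.closure {b}).topologicalClosure ≃* Multiplicative ℤ_[p])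
    (heB : Continuous eB) (heB' : Continuous eB.symm)
    (hsup : (Subgroup.closure {b}).topologicalClosure ⊔ A = ⊤)
    (hinf : (Subgroup.closure {b}).topologicalClosure ⊓ A = ⊥)
    (hact : ∀ a : A, eA ⟨b * a * b⁻¹, hA.conj_mem a a.2 b⟩ =
      Multiplicative.ofAdd ((1 + (p : ℤ_[p]) ^ s) • Multiplicative.toAdd (eA a))) :
    ∀ H : Subgroup G, IsOpen (H : Set G) → Powerful p H ∧ Uniform p H :=
  hereditarily_uniform_general p hp3 s hs d G hpro A hA b eA heA heA' eB heB hsup hinf hact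
end
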